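/- Let f : ℝⁿ → ℝ be D-Lipschitz with D ≥ 0. Then for every x ∈ ℝⁿ, the Gaussian-smoothed value f_μ(x) converges to f(x) as the smoothing parameter μ tends to 0 from the right; in fact |f_μ(x) − f(x)| ≤ μ·D·√n for every μ > 0. -/

import Mathlib

open MeasureTheory ProbabilityTheory Filter

/-- The standard Gaussian measure on `ℝⁿ` (Euclidean space), the product over the `n`
coordinates of the real Gaussian measure with mean 0 and variance 1. -/
noncomputable def stdGaussian (n : ℕ) : Measure (EuclideanSpace ℝ (Fin n)) :=
  (Measure.pi fun _ : Fin n => gaussianReal 0 1).map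
    (MeasurableEquiv.toLp 2 (Fin n → ℝ))

/-- The Gaussian-smoothed function of `f` with smoothing parameter `μ`. -/
noncomputable def gaussianSmoothed {n : ℕ} (f : EuclideanSpace ℝ (Fin n) → ℝ) (μ : ℝ)
    (x : EuclideanSpace ℝ (Fin n)) : ℝ :=
  ∫ ξ, f (x + μ • ξ) ∂(stdGaussian n)

/-!
Lipschitz continuity gives `|f (x + μ ξ) - f x| ≤ μ D ‖ξ‖`, hence
`|f_μ x - f x| ≤ μ D 𝔼‖ξ‖ ≤ μ D √(𝔼‖ξ‖²)`, and `𝔼‖ξ‖² = n` since each coordinate of a standard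
Gaussian vector has second moment equal to its variance, `1`.
-/

open scoped NNReal RealInnerProductSpace

lemma integral_le_sqrt_integral_sq {Ω : Type*} [MeasurableSpace Ω] {ν : Measure Ω}
    [IsProbabilityMeasure ν] {X : Ω → ℝ} (hX : MemLp X 2 ν) :
    ∫ ω, X ω ∂ν ≤ √(∫ ω, X ω ^ 2 ∂ν) := by
  have h := variance_nonneg X ν
  rw [variance_eq_sub hX] at h
  exact Real.le_sqrt_of_sq_le (by simpa using h)

lemma LipschitzWith.abs_integral_comp_add_smul_sub_le {E : Type*} [NormedAddCommGroup E]
    [NormedSpace ℝ E] [MeasurableSpace E] [OpensMeasurableSpace E] {K : ℝ≥0} {f : E → ℝ}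
    (hf : LipschitzWith K f) {ν : Measure E} [IsProbabilityMeasure ν]
    (hν : Integrable (fun ξ => ‖ξ‖) ν) (x : E) (μ : ℝ) :
    |∫ ξ, f (x + μ • ξ) ∂ν - f x| ≤ |μ| * K * ∫ ξ, ‖ξ‖ ∂ν := by
  have hdiff : ∀ ξ, ‖f (x + μ • ξ) - f x‖ ≤ |μ| * K * ‖ξ‖ := fun ξ => by
    calc ‖f (x + μ • ξ) - f x‖ = dist (f (x + μ • ξ)) (f x) := rfl
      _ ≤ K * dist (x + μ • ξ) x := hf.dist_le_mul _ _
      _ = |μ| * K * ‖ξ‖ := by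
        rw [dist_eq_norm, add_sub_cancel_left, norm_smul, Real.norm_eq_abs]; ring
  have hbound : Integrable (fun ξ => |μ| * K * ‖ξ‖) ν := hν.const_mul _
  have hint : Integrable (fun ξ => f (x + μ • ξ)) ν := by
    have hmeas : AEStronglyMeasurable (fun ξ => f (x + μ • ξ)) ν :=
      (hf.continuous.comp (by fun_prop)).aestronglyMeasurable
    have hsub := hbound.mono' (hmeas.sub aestronglyMeasurable_const) (ae_of_all _ hdiff)
    simpa using hsub.add (integrable_const (f x))
  calc |∫ ξ, f (x + μ • ξ) ∂ν - f x|
      = ‖∫ ξ, (f (x + μ • ξ) - f x) ∂ν‖ := by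
        rw [integral_sub hint (integrable_const _), integral_const]
        simp
    _ ≤ ∫ ξ, |μ| * K * ‖ξ‖ ∂ν := norm_integral_le_of_norm_le hbound (ae_of_all _ hdiff)
    _ = |μ| * K * ∫ ξ, ‖ξ‖ ∂ν := integral_const_mul _ _

section stdGaussian

variable {E : Type*} [NormedAddCommGroup E] [InnerProductSpace ℝ E] [FiniteDimensional ℝ E]
  [MeasurableSpace E] [BorelSpace E]

lemma integral_sq_inner_stdGaussian (v : E) :
    ∫ x, ⟪v, x⟫ ^ 2 ∂(stdGaussian E) = ‖v‖ ^ 2 := by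
  have h := variance_eq_sub (IsGaussian.memLp_dual (stdGaussian E) (innerSL ℝ v) 2 (by simp))
  rw [variance_dual_stdGaussian, integral_strongDual_stdGaussian, innerSL_apply_norm] at h
  simpa using h.symm

lemma integral_norm_sq_stdGaussian :
    ∫ x, ‖x‖ ^ 2 ∂(stdGaussian E) = Module.finrank ℝ E := by
  let b := stdOrthonormalBasis ℝ E
  simp_rw [← b.sum_sq_inner_right]
  rw [integral_finsetSum]
  · simp [integral_sq_inner_stdGaussian, b.orthonormal.1]
  · exact fun i _ => (IsGaussian.memLp_dual _ (innerSL ℝ (b i)) 2 (by simp)).integrable_sq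

lemma integral_norm_stdGaussian_le :
    ∫ x, ‖x‖ ∂(stdGaussian E) ≤ √(Module.finrank ℝ E) := by
  simpa [integral_norm_sq_stdGaussian] using
    integral_le_sqrt_integral_sq (IsGaussian.memLp_two_id (μ := stdGaussian E)).norm

end stdGaussian

lemma stdGaussian_eq_stdGaussian_euclideanSpace (n : ℕ) :
    _root_.stdGaussian n = ProbabilityTheory.stdGaussian (EuclideanSpace ℝ (Fin n)) :=
  map_pi_eq_stdGaussian

section gaussianSmoothed

variable {n : ℕ} {K : ℝ≥0} {f : EuclideanSpace ℝ (Fin n) → ℝ}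

lemma LipschitzWith.abs_gaussianSmoothed_sub_le (hf : LipschitzWith K f)
    (μ : ℝ) (x : EuclideanSpace ℝ (Fin n)) :
    |gaussianSmoothed f μ x - f x| ≤ |μ| * K * √n := by
  rw [gaussianSmoothed, stdGaussian_eq_stdGaussian_euclideanSpace]
  calc _ ≤ |μ| * K * ∫ ξ, ‖ξ‖ ∂(stdGaussian (EuclideanSpace ℝ (Fin n))) :=
        hf.abs_integral_comp_add_smul_sub_le IsGaussian.integrable_id.norm x μ
    _ ≤ |μ| * K * √n := by
        gcongr
        simpa using integral_norm_stdGaussian_le (E := EuclideanSpace ℝ (Fin n))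

lemma LipschitzWith.tendsto_gaussianSmoothed (hf : LipschitzWith K f)
    (x : EuclideanSpace ℝ (Fin n)) :
    Tendsto (fun μ => gaussianSmoothed f μ x) (nhds 0) (nhds (f x)) := by
  rw [tendsto_iff_norm_sub_tendsto_zero]
  refine squeeze_zero (fun _ => norm_nonneg _) (fun μ => hf.abs_gaussianSmoothed_sub_le μ x) ?_
  have hcont : Continuous fun μ : ℝ => |μ| * K * √n := by fun_prop
  exact hcont.tendsto' 0 0 (by simp)

end gaussianSmoothed

theorem stmt5_general (n : ℕ) (f : EuclideanSpace ℝ (Fin n) → ℝ) (D : ℝ) (hD : 0 ≤ D)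
    (hlip : ∀ x y : EuclideanSpace ℝ (Fin n), |f x - f y| ≤ D * ‖x - y‖) :
    ∀ x : EuclideanSpace ℝ (Fin n),
      Tendsto (fun μ : ℝ => gaussianSmoothed f μ x) (nhdsWithin 0 (Set.Ioi 0)) (nhds (f x)) ∧
      ∀ μ : ℝ, 0 < μ → |gaussianSmoothed f μ x - f x| ≤ μ * D * Real.sqrt n := by
  have hf : LipschitzWith D.toNNReal f := .of_dist_le_mul fun x y => by
    simpa [Real.coe_toNNReal D hD, dist_eq_norm] using hlip x y
  refine fun x =>
    ⟨(hf.tendsto_gaussianSmoothed x).mono_left nhdsWithin_le_nhds, fun μ hμ => ?_⟩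
  simpa [abs_of_pos hμ, Real.coe_toNNReal D hD] using hf.abs_gaussianSmoothed_sub_le μ x

theorem stmt5 (n : ℕ) (hn : 1 ≤ n) (f : EuclideanSpace ℝ (Fin n) → ℝ) (D : ℝ) (hD : 0 ≤ D)
    (hlip : ∀ x y : EuclideanSpace ℝ (Fin n), |f x - f y| ≤ D * ‖x - y‖) :
    ∀ x : EuclideanSpace ℝ (Fin n),
      Tendsto (fun μ : ℝ => gaussianSmoothed f μ x) (nhdsWithin 0 (Set.Ioi 0)) (nhds (f x)) ∧
      ∀ μ : ℝ, 0 < μ → |gaussianSmoothed f μ x - f x| ≤ μ * D * Real.sqrt n :=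
  stmt5_general n f D hD hlip
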